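/- arXiv:1807.08004 — 3 statements merged into one kernel-verified Lean document; each statement's English description precedes it below -/
import Mathlib

section
/- Let F be an n×m real matrix such that every submatrix formed by any 2q columns of F has full column rank 2q. Then for any vectors e₁, e₂ ∈ ℝᵐ with at most q nonzero entries each, F e₁ = F e₂ implies e₁ = e₂. -/
open Matrix

/-- If every `2q` columns of `F` are linearly independent (full column rank of
the submatrix), then `q`-sparse vectors with equal images under `F` coincide. -/
theorem stmt6 {n m q : ℕ} (hq : 2 * q ≤ m) (F : Matrix (Fin n) (Fin m) ℝ)
    (hF : ∀ S : Finset (Fin m), S.card = 2 * q →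
      LinearIndependent ℝ (fun j : S => Fᵀ (j : Fin m)))
    (e₁ e₂ : Fin m → ℝ)
    (h₁ : (Function.support e₁).ncard ≤ q)
    (h₂ : (Function.support e₂).ncard ≤ q)
    (heq : F.mulVec e₁ = F.mulVec e₂) : e₁ = e₂ := by
  classical
  set d : Fin m → ℝ := e₁ - e₂ with hdd
  have hd : F.mulVec d = 0 := by
    rw [hdd, mulVec_sub, heq, sub_self]
  have hsub : Function.support d ⊆ Function.support e₁ ∪ Function.support e₂ :=
    Function.support_sub e₁ e₂
  have hcard : (Function.support d).toFinset.card ≤ 2 * q := by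
    have := Set.ncard_union_le (Function.support e₁) (Function.support e₂)
    have h3 : (Function.support d).ncard ≤ (Function.support e₁ ∪ Function.support e₂).ncard :=
      Set.ncard_le_ncard hsub (Set.toFinite _)
    rw [Set.ncard_eq_toFinset_card'] at h3
    omega
  obtain ⟨S, hSsub, hScard⟩ := Finset.exists_superset_card_eq hcard (by
    rw [Fintype.card_fin]; exact hq)
  have hli := hF S hScard
  rw [Fintype.linearIndependent_iff] at hli
  have hsum : ∑ j : S, d (j : Fin m) • (Fᵀ (j : Fin m)) = 0 := by
    funext i
    have : ∑ j ∈ S, F i j * d j = F.mulVec d i := by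
      rw [mulVec]
      refine Finset.sum_subset (Finset.subset_univ S) ?_
      intro j _ hjS
      have : d j = 0 := by
        by_contra h
        exact hjS (hSsub (Set.mem_toFinset.mpr h))
      simp [dotProduct, this]
    simp only [Finset.sum_apply, Pi.smul_apply, smul_eq_mul]
    rw [Finset.sum_coe_sort S (fun j => d j * Fᵀ j i)]
    simp only [transpose_apply]
    have h2 : ∑ x ∈ S, d x * F i x = (F *ᵥ d) i := by
      rw [← this]; exact Finset.sum_congr rfl (fun j _ => mul_comm _ _)
    simp [h2, hd]
  have hzero := hli (fun j => d (j : Fin m)) hsum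
  have hd0 : d = 0 := by
    funext j
    by_cases hj : j ∈ S
    · exact hzero ⟨j, hj⟩
    · by_contra h
      exact hj (hSsub (Set.mem_toFinset.mpr h))
  have : e₁ - e₂ = 0 := hd0
  exact sub_eq_zero.mp this
end

section
/- Let F be an n×m real matrix such that every set of 2q columns of F is linearly independent. Then any e with |supp(e)| ≤ q is the unique solution of the ℓ₀-minimization problem: minimize ‖z‖₀ subject to F z = F e. -/
open Matrix

/-- Under the `2q`-column linear independence condition, any `q`-sparse `e`
is the unique solution of the ℓ₀ minimization `min ‖z‖₀ s.t. F z = F e`. -/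
theorem stmt7 {n m q : ℕ} (hq : 2 * q ≤ m) (F : Matrix (Fin n) (Fin m) ℝ)
    (hF : ∀ S : Finset (Fin m), S.card = 2 * q →
      LinearIndependent ℝ (fun j : S => Fᵀ (j : Fin m)))
    (e : Fin m → ℝ) (he : (Function.support e).ncard ≤ q) :
    ∀ z : Fin m → ℝ, F.mulVec z = F.mulVec e →
      (Function.support z).ncard ≤ (Function.support e).ncard → z = e := by
  intro z hFz hcard
  -- support of z - e
  have hsub : Function.support (z - e) ⊆ Function.support z ∪ Function.support e := by
    intro j hj
    by_contra h
    simp only [Set.mem_union, Function.mem_support, not_or, not_not] at h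
    apply hj
    simp [Pi.sub_apply, h.1, h.2]
  have hfin : (Function.support (z - e)).Finite := Set.toFinite _
  set T : Finset (Fin m) := hfin.toFinset with hT
  have hTcard : T.card ≤ 2 * q := by
    have h1 : (Function.support (z - e)).ncard ≤ (Function.support z ∪ Function.support e).ncard :=
      Set.ncard_le_ncard hsub (Set.toFinite _)
    have h2 : (Function.support z ∪ Function.support e).ncard ≤
        (Function.support z).ncard + (Function.support e).ncard :=
      Set.ncard_union_le _ _
    have h3 : (Function.support (z - e)).ncard ≤ 2 * q := by
      have := le_trans h1 h2
      omega
    have h4 : T.card = (Function.support (z - e)).ncard := by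
      rw [hT, Set.ncard_eq_toFinset_card _ hfin]
    omega
  obtain ⟨S, hTS, hScard⟩ := Finset.exists_superset_card_eq hTcard (by simpa using hq)
  have hli := hF S hScard
  rw [Fintype.linearIndependent_iff] at hli
  have hzero : ∀ j ∈ S, (z - e) j = 0 := by
    have := hli (fun j : S => (z - e) (j : Fin m)) ?_
    · intro j hj
      exact this ⟨j, hj⟩
    · funext i
      have hsum : ∑ j : S, (z - e) (j : Fin m) * F i j = ∑ j : Fin m, (z - e) j * F i j := by
        rw [Finset.sum_coe_sort S (fun j => (z - e) j * F i j)]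
        apply Finset.sum_subset (Finset.subset_univ S)
        intro j _ hjS
        have : (z - e) j = 0 := by
          by_contra h
          exact hjS (hTS (hfin.mem_toFinset.mpr h))
        simp [this]
      have hmv : ∑ j : Fin m, (z - e) j * F i j = 0 := by
        have : F.mulVec (z - e) = 0 := by
          rw [F.mulVec_sub, hFz, sub_self]
        have := congrFun this i
        simpa [Matrix.mulVec, dotProduct, mul_comm] using this
      simpa [Matrix.transpose_apply, mul_comm, Finset.sum_apply] using hsum.trans hmv
  have : z - e = 0 := by
    funext j
    by_cases hj : j ∈ S
    · exact hzero j hj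
    · by_contra h
      exact hj (hTS (hfin.mem_toFinset.mpr h))
  exact sub_eq_zero.mp this
end

section
/- Let A : ℝⁿ → ℝⁿ, C : ℝⁿ → ℝᵐ, T ≥ 1, and q ∈ ℕ. If there exists a nonzero z ∈ ℝⁿ with ∑_{k=0}^{T−1} |supp(C A^k z)| ≤ 2q, then there exist x₀ ≠ x₀' and error sequences e_k, e_k' with |supp(e_k)|, |supp(e_k')| ≤ q producing identical measurements y_k = C A^k x₀ + e_k = C A^k x₀' + e_k' for all k = 0,…,T−1; hence q errors are not correctable. -/
/-! Take `x₀ = z` and `x₀' = 0`. Each `C Aᵏ z` has at most `2q` nonzero entries; writing it as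
`e'ₖ - eₖ` with both parts supported on at most `q` of them makes the measurements agree. -/

open Function Set

theorem exists_sub_eq_of_ncard_support_le_two_mul {ι M : Type*} [Finite ι] [AddGroup M]
    (w : ι → M) {q : ℕ} (hw : (support w).ncard ≤ 2 * q) :
    ∃ a b : ι → M, (support a).ncard ≤ q ∧ (support b).ncard ≤ q ∧ a - b = w := by
  obtain ⟨t, hts, ht⟩ := Set.exists_subset_card_eq (min_le_right q (support w).ncard)
  refine ⟨t.indicator w, -tᶜ.indicator w, ?_, ?_, ?_⟩
  · rw [support_indicator, inter_eq_left.mpr hts, ht]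
    exact min_le_left _ _
  · rw [support_neg, support_indicator, ← sdiff_eq_compl_inter, ncard_sdiff hts, ht]
    omega
  · rw [sub_neg_eq_add, indicator_self_add_compl]

theorem stmt16_general {n m : ℕ} (A : (Fin n → ℝ) →ₗ[ℝ] (Fin n → ℝ))
    (C : (Fin n → ℝ) →ₗ[ℝ] (Fin m → ℝ)) (T q : ℕ)
    (hz : ∃ z : Fin n → ℝ, z ≠ 0 ∧
      ∑ k ∈ Finset.range T, (Function.support (C ((A ^ k) z))).ncard ≤ 2 * q) :
    ∃ (x0 x0' : Fin n → ℝ) (e e' : ℕ → Fin m → ℝ),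
      x0 ≠ x0' ∧
      (∀ k < T, (Function.support (e k)).ncard ≤ q) ∧
      (∀ k < T, (Function.support (e' k)).ncard ≤ q) ∧
      (∀ k < T, C ((A ^ k) x0) + e k = C ((A ^ k) x0') + e' k) := by
  obtain ⟨z, hz0, hsum⟩ := hz
  have hsplit : ∀ k < T, ∃ a b : Fin m → ℝ, (support a).ncard ≤ q ∧ (support b).ncard ≤ q ∧
      a - b = C ((A ^ k) z) := fun k hk =>
    exists_sub_eq_of_ncard_support_le_two_mul _ <|
      (Finset.single_le_sum (fun _ _ => Nat.zero_le _) (Finset.mem_range.mpr hk)).trans hsum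
  choose! a b ha hb hab using hsplit
  refine ⟨z, 0, b, a, hz0, hb, ha, fun k hk => ?_⟩
  rw [← hab k hk, map_zero, map_zero, zero_add, sub_add_cancel]

/-- Converse of the correctability characterization: if some nonzero `z` has
`∑_{k<T} |supp(C Aᵏ z)| ≤ 2q`, then two distinct initial states admit
`q`-sparse error sequences producing identical measurements. -/
theorem stmt16 {n m : ℕ} (A : (Fin n → ℝ) →ₗ[ℝ] (Fin n → ℝ))
    (C : (Fin n → ℝ) →ₗ[ℝ] (Fin m → ℝ)) (T q : ℕ) (hT : 1 ≤ T)
    (hz : ∃ z : Fin n → ℝ, z ≠ 0 ∧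
      ∑ k ∈ Finset.range T, (Function.support (C ((A ^ k) z))).ncard ≤ 2 * q) :
    ∃ (x0 x0' : Fin n → ℝ) (e e' : ℕ → Fin m → ℝ),
      x0 ≠ x0' ∧
      (∀ k < T, (Function.support (e k)).ncard ≤ q) ∧
      (∀ k < T, (Function.support (e' k)).ncard ≤ q) ∧
      (∀ k < T, C ((A ^ k) x0) + e k = C ((A ^ k) x0') + e' k) :=
  stmt16_general A C T q hz
end
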